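/- arXiv:2305.15927 — 4 statements merged into one kernel-verified Lean document; each statement's English description precedes it below -/
import Mathlib

section
/- Let O be a finite index set, and for each i ∈ O let 𝒳_i, 𝒜_i be nonempty standard Borel spaces, ψ_i : 𝒜_i → 𝒳_i measurable, and c_i : 𝒳_i × 𝒳_i → [0,∞] measurable. Let P_d be a probability measure on 𝒳 = Π_{i∈O} 𝒳_i, μ_p a probability measure on 𝒜 = Π_{i∈O} 𝒜_i, P_θ = Ψ#μ_p with Ψ(a) = (ψ_i(a_i))_{i∈O}, and c(x,y) = Σ_{i∈O} c_i(x_i, y_i). Then W_c(P_d, P_θ) ≥ inf { R((φ_i)) : (φ_i)_{i∈O} Markov kernels satisfying the push-forward constraints }, i.e., for every coupling Γ of P_d and P_θ, ∫ c dΓ is at least the infimum of the reconstruction objective over constraint-satisfying backward families. (Inequality (11) in the proof of Theorem 1.) -/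
open MeasureTheory ProbabilityTheory ENNReal

/-!
Given a coupling `Γ` of `P_d` and `Ψ#μ_p`, glue it with the coupling `a ↦ (Ψ a, a)` of `Ψ#μ_p`
and `μ_p` along their common marginal. This yields a coupling `Γ'` of `P_d` and `μ_p` under which
`(x, Ψ a)` has law `Γ`, so `∫ c(x, Ψ a) dΓ' = ∫ c dΓ`. Disintegrating the `i`-th coordinate
marginal of `Γ'` gives a Markov kernel `φ_i` satisfying the push-forward constraint, and since the
cost is a sum over coordinates, the reconstruction objective of `(φ_i)` is exactly `∫ c dΓ`.
-/

namespace MeasureTheory.Measure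

variable {α β γ δ : Type*} {mα : MeasurableSpace α} {mβ : MeasurableSpace β}
  {mγ : MeasurableSpace γ} {mδ : MeasurableSpace δ}

lemma map_compProd_prodMkLeft (Γ : Measure (α × β)) [SFinite Γ] (κ : Kernel β γ)
    [IsSFiniteKernel κ] :
    (Γ ⊗ₘ κ.prodMkLeft α).map (fun q => (q.1.2, q.2)) = Γ.snd ⊗ₘ κ := by
  ext s hs
  rw [map_apply (by fun_prop) hs, compProd_apply (measurable_fst.snd.prodMk measurable_snd hs),
    compProd_apply hs, snd, lintegral_map (Kernel.measurable_kernel_prodMk_left hs) measurable_snd]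
  rfl

/-- The glued measure is `(x, y, a) ↦ (x, a)` under `Γ(dx, dy) ν_y(da)`, where `ν_y` is the law
of `a ~ μ` conditioned on `f a = y`; it lives on `y = f a`. -/
lemma exists_map_prodMap_id_eq [MeasurableEq β] [StandardBorelSpace γ] [Nonempty γ]
    {Γ : Measure (α × β)} {f : γ → β} (hf : Measurable f) {μ : Measure γ}
    [IsProbabilityMeasure μ] (hΓ : Γ.snd = μ.map f) :
    ∃ Γ' : Measure (α × γ), Γ'.snd = μ ∧ Γ'.map (Prod.map id f) = Γ := by
  have : IsProbabilityMeasure (μ.map f) := isProbabilityMeasure_map hf.aemeasurable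
  have : IsProbabilityMeasure Γ := ⟨by rw [← snd_univ, hΓ, measure_univ]⟩
  have hgraph : Measurable fun a => (f a, a) := hf.prodMk measurable_id
  set ν := μ.map fun a => (f a, a)
  have : IsProbabilityMeasure ν := isProbabilityMeasure_map hgraph.aemeasurable
  set Γ'' := Γ ⊗ₘ ν.condKernel.prodMkLeft α
  have hΓ''ν : Γ''.map (fun q => (q.1.2, q.2)) = ν := by
    rw [map_compProd_prodMkLeft, hΓ, ← fst_map_prodMk measurable_id]
    exact ν.disintegrate ν.condKernel
  have hν_graph : ∀ᵐ p ∂ν, p.1 = f p.2 :=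
    (ae_map_iff hgraph.aemeasurable (measurableSet_eq_fun measurable_fst
      (hf.comp measurable_snd))).2 (ae_of_all _ fun _ => rfl)
  have hΓ''_graph : ∀ᵐ q ∂Γ'', q.1.2 = f q.2 := ae_of_ae_map (by fun_prop) (hΓ''ν ▸ hν_graph)
  refine ⟨Γ''.map (fun q => (q.1.1, q.2)), ?_, ?_⟩
  · rw [snd_map_prodMk (by fun_prop), ← snd_map_prodMk (measurable_fst.snd), hΓ''ν,
      snd_map_prodMk hf, map_id']
  · rw [map_map (by fun_prop) (by fun_prop)]
    calc Γ''.map (Prod.map id f ∘ fun q => (q.1.1, q.2))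
        = Γ''.map Prod.fst :=
          map_congr (by filter_upwards [hΓ''_graph] with q hq using Prod.ext rfl hq.symm)
      _ = Γ := fst_compProd Γ _

variable {Γ : Measure (α × β)} {f : α → γ} {g : β → δ}

lemma fst_map_prodMap (hf : Measurable f) (hg : Measurable g) :
    (Γ.map (Prod.map f g)).fst = Γ.fst.map f := by
  rw [fst, fst, map_map measurable_fst (hf.prodMap hg), map_map hf measurable_fst]
  rfl

lemma snd_map_prodMap (hf : Measurable f) (hg : Measurable g) :
    (Γ.map (Prod.map f g)).snd = Γ.snd.map g := by
  rw [snd, snd, map_map measurable_snd (hf.prodMap hg), map_map hg measurable_snd]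
  rfl

variable [IsFiniteMeasure Γ] [StandardBorelSpace δ] [Nonempty δ]

lemma condKernel_comp_fst (ρ : Measure (γ × δ)) [IsFiniteMeasure ρ] :
    ρ.condKernel ∘ₘ ρ.fst = ρ.snd := by
  rw [← snd_compProd, ρ.disintegrate]

lemma condKernel_map_prodMap_comp_map_fst (hf : Measurable f) (hg : Measurable g) :
    (Γ.map (Prod.map f g)).condKernel ∘ₘ Γ.fst.map f = Γ.snd.map g := by
  rw [← fst_map_prodMap hf hg, ← snd_map_prodMap hf hg]
  exact condKernel_comp_fst _

lemma lintegral_condKernel_map_prodMap (hf : Measurable f) (hg : Measurable g)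
    {h : γ × δ → ℝ≥0∞} (hh : Measurable h) :
    ∫⁻ x, ∫⁻ a, h (f x, a) ∂(Γ.map (Prod.map f g)).condKernel (f x) ∂Γ.fst
      = ∫⁻ q, h (Prod.map f g q) ∂Γ := by
  set ρ := Γ.map (Prod.map f g)
  calc ∫⁻ x, ∫⁻ a, h (f x, a) ∂ρ.condKernel (f x) ∂Γ.fst
      = ∫⁻ t, ∫⁻ a, h (t, a) ∂ρ.condKernel t ∂ρ.fst := by
        rw [fst_map_prodMap hf hg, lintegral_map hh.lintegral_kernel_prod_right' hf]
    _ = ∫⁻ p, h p ∂ρ := lintegral_condKernel hh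
    _ = ∫⁻ q, h (Prod.map f g q) ∂Γ := lintegral_map hh (hf.prodMap hg)

end MeasureTheory.Measure

lemma lintegral_sum_condKernel_map_eval {ι : Type*} [Fintype ι] {X A : ι → Type*}
    [∀ i, MeasurableSpace (X i)] [∀ i, MeasurableSpace (A i)] [∀ i, StandardBorelSpace (A i)]
    [∀ i, Nonempty (A i)] (Γ : Measure ((∀ i, X i) × (∀ i, A i))) [IsFiniteMeasure Γ]
    {g : ∀ i, X i × A i → ℝ≥0∞} (hg : ∀ i, Measurable (g i)) :
    ∫⁻ x, ∑ i, ∫⁻ a, g i (x i, a) ∂(Γ.map (Prod.map (· i) (· i))).condKernel (x i) ∂Γ.fst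
      = ∫⁻ q, ∑ i, g i (q.1 i, q.2 i) ∂Γ := by
  have hmeas : ∀ i, Measurable fun t : X i =>
      ∫⁻ a, g i (t, a) ∂(Γ.map (Prod.map (· i) (· i))).condKernel t :=
    fun i => (hg i).lintegral_kernel_prod_right'
  calc _ = ∑ i, ∫⁻ x, ∫⁻ a, g i (x i, a)
          ∂(Γ.map (Prod.map (· i) (· i))).condKernel (x i) ∂Γ.fst :=
        lintegral_finsetSum _ fun i _ => (hmeas i).comp (measurable_pi_apply i)
    _ = ∑ i, ∫⁻ q, g i (q.1 i, q.2 i) ∂Γ := Finset.sum_congr rfl fun i _ =>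
        Measure.lintegral_condKernel_map_prodMap (measurable_pi_apply i) (measurable_pi_apply i)
          (hg i)
    _ = _ := (lintegral_finsetSum _ fun i _ => (hg i).comp (by fun_prop)).symm

theorem otp_dag_coupling_ge_backward_inf_general
    {O : Type*} [Fintype O]
    (𝒳 𝒜 : O → Type*)
    [∀ i, MeasurableSpace (𝒳 i)] [∀ i, StandardBorelSpace (𝒳 i)]
    [∀ i, MeasurableSpace (𝒜 i)] [∀ i, StandardBorelSpace (𝒜 i)] [∀ i, Nonempty (𝒜 i)]
    (ψ : ∀ i, 𝒜 i → 𝒳 i) (hψ : ∀ i, Measurable (ψ i))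
    (c : ∀ i, 𝒳 i × 𝒳 i → ℝ≥0∞) (hc : ∀ i, Measurable (c i))
    (Pd : Measure (∀ i, 𝒳 i))
    (μp : Measure (∀ i, 𝒜 i)) [IsProbabilityMeasure μp]
    (Γ : Measure ((∀ i, 𝒳 i) × (∀ i, 𝒳 i)))
    (hΓfst : Γ.fst = Pd)
    (hΓsnd : Γ.snd = μp.map (fun a i => ψ i (a i))) :
    (∫⁻ p, ∑ i, c i (p.1 i, p.2 i) ∂Γ) ≥
    sInf { r | ∃ φ : ∀ i, Kernel (𝒳 i) (𝒜 i),
        (∀ i, IsMarkovKernel (φ i)) ∧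
        (∀ i, (Pd.map (fun x => x i)).bind (fun xi => φ i xi)
            = μp.map (fun a => a i)) ∧
        r = ∫⁻ x, ∑ i, ∫⁻ a, c i (x i, ψ i a) ∂(φ i (x i)) ∂Pd } := by
  set Ψ : (∀ i, 𝒜 i) → ∀ i, 𝒳 i := fun a i => ψ i (a i)
  have hΨ : Measurable Ψ := measurable_pi_lambda _ fun i => (hψ i).comp (measurable_pi_apply i)
  obtain ⟨Γ', hsnd, hmap⟩ := Measure.exists_map_prodMap_id_eq hΨ hΓsnd
  have : IsProbabilityMeasure Γ' := ⟨by rw [← Measure.snd_univ, hsnd, measure_univ]⟩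
  have hfst : Γ'.fst = Pd := by
    rw [← hΓfst, ← hmap, Measure.fst_map_prodMap measurable_id hΨ, Measure.map_id]
  have hcost : Measurable fun p : (∀ i, 𝒳 i) × (∀ i, 𝒳 i) => ∑ i, c i (p.1 i, p.2 i) :=
    Finset.measurable_sum _ fun i _ => (hc i).comp (by fun_prop)
  refine sInf_le ⟨fun i => (Γ'.map (Prod.map (· i) (· i))).condKernel, fun i => inferInstance,
    fun i => ?_, ?_⟩
  · rw [← hfst, ← hsnd]
    exact Measure.condKernel_map_prodMap_comp_map_fst (Γ := Γ') (measurable_pi_apply i)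
      (measurable_pi_apply i)
  · calc ∫⁻ p, ∑ i, c i (p.1 i, p.2 i) ∂Γ = ∫⁻ q, ∑ i, c i (q.1 i, ψ i (q.2 i)) ∂Γ' := by
          rw [← hmap, lintegral_map hcost (measurable_id.prodMap hΨ)]
          rfl
      _ = _ := by
          rw [← hfst]
          exact (lintegral_sum_condKernel_map_eval Γ' fun i =>
            (hc i).comp (measurable_fst.prodMk ((hψ i).comp measurable_snd))).symm

/-- **Inequality (11) in the proof of Theorem 1.** For every coupling `Γ` of the data
distribution `Pd` and the model distribution `Pθ = Ψ#μp`, the transport cost `∫ c dΓ`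
is at least the infimum of the reconstruction objective over all families of Markov
kernels (backward maps) satisfying the push-forward constraints. -/
theorem otp_dag_coupling_ge_backward_inf
    {O : Type*} [Fintype O]
    (𝒳 𝒜 : O → Type*)
    [∀ i, MeasurableSpace (𝒳 i)] [∀ i, StandardBorelSpace (𝒳 i)] [∀ i, Nonempty (𝒳 i)]
    [∀ i, MeasurableSpace (𝒜 i)] [∀ i, StandardBorelSpace (𝒜 i)] [∀ i, Nonempty (𝒜 i)]
    (ψ : ∀ i, 𝒜 i → 𝒳 i) (hψ : ∀ i, Measurable (ψ i))
    (c : ∀ i, 𝒳 i × 𝒳 i → ℝ≥0∞) (hc : ∀ i, Measurable (c i))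
    (Pd : Measure (∀ i, 𝒳 i)) [IsProbabilityMeasure Pd]
    (μp : Measure (∀ i, 𝒜 i)) [IsProbabilityMeasure μp]
    (Γ : Measure ((∀ i, 𝒳 i) × (∀ i, 𝒳 i)))
    (hΓfst : Γ.fst = Pd)
    (hΓsnd : Γ.snd = μp.map (fun a i => ψ i (a i))) :
    (∫⁻ p, ∑ i, c i (p.1 i, p.2 i) ∂Γ) ≥
    sInf { r | ∃ φ : ∀ i, Kernel (𝒳 i) (𝒜 i),
        (∀ i, IsMarkovKernel (φ i)) ∧
        (∀ i, (Pd.map (fun x => x i)).bind (fun xi => φ i xi)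
            = μp.map (fun a => a i)) ∧
        r = ∫⁻ x, ∑ i, ∫⁻ a, c i (x i, ψ i a) ∂(φ i (x i)) ∂Pd } :=
  otp_dag_coupling_ge_backward_inf_general 𝒳 𝒜 ψ hψ c hc Pd μp Γ hΓfst hΓsnd
end

section
/- Let 𝒳 and 𝒵 be nonempty standard Borel spaces, μ a probability measure on 𝒳 (the data distribution), ν a probability measure on 𝒵 (the prior over the latent variable), ψ : 𝒵 → 𝒳 a measurable decoder, and c : 𝒳 × 𝒳 → [0,∞] a measurable cost. Then W_c(μ, ψ#ν) = inf over Markov kernels φ from 𝒳 to 𝒵 with μ.bind φ = ν of ∫_𝒳 ∫_𝒵 c(x, ψ(z)) dφ(x)(z) dμ(x). (The two-node special case of Theorem 1, recovering the Wasserstein auto-encoder objective, which the paper's framework generalizes.) -/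
open MeasureTheory ProbabilityTheory ENNReal

/-- The Kantorovich optimal transport cost between two measures on the same space. -/
noncomputable def kantorovich {𝒴 : Type*} [MeasurableSpace 𝒴]
    (μ ν : Measure 𝒴) (C : 𝒴 × 𝒴 → ℝ≥0∞) : ℝ≥0∞ :=
  sInf { r | ∃ Γ : Measure (𝒴 × 𝒴), Γ.fst = μ ∧ Γ.snd = ν ∧ r = ∫⁻ p, C p ∂Γ }

/-!
A kernel `φ` with `φ#μ = ν` gives the coupling `μ ⊗ (ψ ∘ φ)` of `μ` and `ψ#ν`, whose cost is the
reconstruction objective of `φ`. Conversely, disintegrate a coupling as `Γ = μ ⊗ ρ` and let `κ` be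
the conditional law of `z ∼ ν` given `ψ z`. Then `ψ ∘ κ` is the identity `ψ#ν`-a.e., so the encoder
`φ = κ ∘ ρ` satisfies `φ#μ = κ#(ψ#ν) = ν` and `μ ⊗ (ψ ∘ φ) = μ ⊗ ρ = Γ`. The two infima therefore
range over the same set of values.
-/

section

variable {α β γ : Type*} [MeasurableSpace α] [MeasurableSpace β] [MeasurableSpace γ]

lemma ProbabilityTheory.Kernel.comp_ae_eq_comp_of_ae_eq {μ : Measure α} {ρ : Kernel α β}
    {η η' : Kernel β γ} (h : η =ᵐ[ρ ∘ₘ μ] η') : η ∘ₖ ρ =ᵐ[μ] η' ∘ₖ ρ := by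
  filter_upwards [Measure.ae_ae_of_ae_comp h] with x hx
  rw [Kernel.comp_apply, Kernel.comp_apply, Measure.comp_congr hx]

lemma lintegral_compProd_map {μ : Measure α} [SFinite μ] {φ : Kernel α β} [IsSFiniteKernel φ]
    {ψ : β → γ} (hψ : Measurable ψ) {c : α × γ → ℝ≥0∞} (hc : Measurable c) :
    ∫⁻ p, c p ∂(μ ⊗ₘ φ.map ψ) = ∫⁻ x, ∫⁻ z, c (x, ψ z) ∂(φ x) ∂μ := by
  rw [Measure.lintegral_compProd hc]
  refine lintegral_congr fun x => ?_
  rw [Kernel.map_apply _ hψ, lintegral_map (by fun_prop) hψ]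

lemma exists_markovKernel_compProd_map_eq [StandardBorelSpace β] [Nonempty β]
    [StandardBorelSpace γ] [Nonempty γ] {Γ : Measure (α × β)} [IsFiniteMeasure Γ]
    {ν : Measure γ} [IsFiniteMeasure ν] {ψ : γ → β} (hψ : Measurable ψ)
    (hΓ : Γ.snd = ν.map ψ) :
    ∃ φ : Kernel α γ, IsMarkovKernel φ ∧ φ ∘ₘ Γ.fst = ν ∧ Γ.fst ⊗ₘ φ.map ψ = Γ := by
  set κ := condDistrib id ψ ν
  have hκ : κ ∘ₘ ν.map ψ = ν := by
    rw [condDistrib_comp_map hψ.aemeasurable aemeasurable_id, Measure.map_id]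
  have hκψ : κ.map ψ =ᵐ[ν.map ψ] Kernel.id := by
    filter_upwards [condDistrib_comp ψ aemeasurable_id hψ, condDistrib_self ψ (μ := ν)]
      with y h h' using h.symm.trans h'
  have hρ : Γ.condKernel ∘ₘ Γ.fst = ν.map ψ := by
    rw [← Measure.snd_compProd, Measure.disintegrate, hΓ]
  refine ⟨κ ∘ₖ Γ.condKernel, inferInstance, ?_, ?_⟩
  · rw [← Measure.comp_assoc, hρ, hκ]
  · rw [← hρ] at hκψ
    have h := Kernel.comp_ae_eq_comp_of_ae_eq hκψ
    rw [Kernel.id_comp, ← Kernel.map_comp] at h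
    conv_rhs => rw [← Γ.disintegrate Γ.condKernel]
    exact Measure.compProd_congr h

end

/-- **Two-node special case of Theorem 1 (the Wasserstein auto-encoder objective).**
For data distribution `μ` on `𝒳`, prior `ν` on the latent space `𝒵` and a measurable
decoder `ψ : 𝒵 → 𝒳`, the Kantorovich transport cost `W_c(μ, ψ#ν)` equals the infimum
of the reconstruction objective over Markov kernels (stochastic encoders)
`φ : 𝒳 ⇝ 𝒵` satisfying the push-forward constraint `φ#μ = ν`. -/
theorem otp_dag_wae
    {𝒳 𝒵 : Type*}
    [MeasurableSpace 𝒳] [StandardBorelSpace 𝒳] [Nonempty 𝒳]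
    [MeasurableSpace 𝒵] [StandardBorelSpace 𝒵] [Nonempty 𝒵]
    (μ : Measure 𝒳) [IsProbabilityMeasure μ]
    (ν : Measure 𝒵) [IsProbabilityMeasure ν]
    (ψ : 𝒵 → 𝒳) (hψ : Measurable ψ)
    (c : 𝒳 × 𝒳 → ℝ≥0∞) (hc : Measurable c) :
    kantorovich μ (ν.map ψ) c =
    sInf { r | ∃ φ : Kernel 𝒳 𝒵, IsMarkovKernel φ ∧
        μ.bind (fun x => φ x) = ν ∧
        r = ∫⁻ x, ∫⁻ z, c (x, ψ z) ∂(φ x) ∂μ } := by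
  unfold kantorovich
  congr 1
  ext r
  constructor
  · rintro ⟨Γ, rfl, hΓ, rfl⟩
    have : IsFiniteMeasure Γ := ⟨by rw [← Measure.fst_univ]; exact measure_lt_top _ _⟩
    obtain ⟨φ, hφ, hφν, hφΓ⟩ := exists_markovKernel_compProd_map_eq hψ hΓ
    exact ⟨φ, hφ, hφν, by rw [← lintegral_compProd_map hψ hc, hφΓ]⟩
  · rintro ⟨φ, hφ, hφν, rfl⟩
    have := Kernel.IsMarkovKernel.map φ hψ
    refine ⟨μ ⊗ₘ φ.map ψ, Measure.fst_compProd μ _, ?_, (lintegral_compProd_map hψ hc).symm⟩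
    rw [Measure.snd_compProd, ← Measure.map_comp μ φ hψ, hφν]
end

section
/- Let 𝒳 and 𝒜 be nonempty standard Borel spaces, μ a probability measure on 𝒳, ν a probability measure on 𝒜, ψ : 𝒜 → 𝒳 measurable, and c : 𝒳 × 𝒳 → [0,∞] measurable. Then for every coupling Γ of μ and ψ#ν there exists a coupling γ of μ and ν such that ∫_{𝒳×𝒳} c(x, y) dΓ(x, y) = ∫_{𝒳×𝒜} c(x, ψ(a)) dγ(x, a). (The gluing step in the proof of Theorem 1: gluing Γ with the deterministic coupling (id, ψ)#ν along the common marginal ψ#ν.) -/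
open MeasureTheory ProbabilityTheory ENNReal

/-!
Disintegrate `Γ` along its second coordinate: `Γ = ∫ κ y ⊗ δ_y d(ψ#ν)(y)` for a Markov kernel
`κ` from `𝒳` to `𝒳`. Pulling `κ` back along `ψ` gives the coupling `γ = ∫ κ (ψ a) ⊗ δ_a dν(a)`
of `μ` and `ν`, and `(id × ψ)#γ = Γ`, so the two costs agree by the change of variables formula.
-/

namespace MeasureTheory.Measure

variable {α β Ω : Type*} [MeasurableSpace α] [MeasurableSpace β] [MeasurableSpace Ω]

lemma map_prodMap_compProd_comap (ν : Measure α) [SFinite ν] (κ : Kernel β Ω)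
    [IsSFiniteKernel κ] {ψ : α → β} (hψ : Measurable ψ) :
    (ν ⊗ₘ κ.comap ψ hψ).map (Prod.map ψ id) = ν.map ψ ⊗ₘ κ := by
  ext s hs
  rw [map_apply (hψ.prodMap measurable_id) hs, compProd_apply (hψ.prodMap measurable_id hs),
    compProd_apply hs, lintegral_map (κ.measurable_kernel_prodMk_left hs) hψ]
  rfl

variable [StandardBorelSpace Ω] [Nonempty Ω]

lemma exists_fst_eq_and_map_prodMap_eq (ν : Measure α) [SFinite ν] {ψ : α → β}
    (hψ : Measurable ψ) (ρ : Measure (β × Ω)) [IsFiniteMeasure ρ] (hρ : ρ.fst = ν.map ψ) :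
    ∃ π : Measure (α × Ω), π.fst = ν ∧ π.map (Prod.map ψ id) = ρ :=
  ⟨ν ⊗ₘ ρ.condKernel.comap ψ hψ, fst_compProd _ _,
    by rw [map_prodMap_compProd_comap, ← hρ, disintegrate]⟩

lemma exists_snd_eq_and_map_prodMap_eq (ν : Measure α) [SFinite ν] {ψ : α → β}
    (hψ : Measurable ψ) (ρ : Measure (Ω × β)) [IsFiniteMeasure ρ] (hρ : ρ.snd = ν.map ψ) :
    ∃ π : Measure (Ω × α), π.snd = ν ∧ π.map (Prod.map id ψ) = ρ := by
  obtain ⟨π, hπfst, hπmap⟩ :=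
    exists_fst_eq_and_map_prodMap_eq ν hψ (ρ.map Prod.swap) (by rwa [fst_map_swap])
  refine ⟨π.map Prod.swap, by rwa [snd_map_swap], ?_⟩
  calc (π.map Prod.swap).map (Prod.map id ψ)
      = (π.map (Prod.map ψ id)).map Prod.swap := by
        rw [map_map (by fun_prop) measurable_swap, map_map measurable_swap (by fun_prop)]
        rfl
    _ = ρ := by rw [hπmap, map_map measurable_swap measurable_swap, Prod.swap_swap_eq, map_id]

end MeasureTheory.Measure

theorem otp_dag_gluing_general
    {𝒳 𝒜 : Type*}
    [MeasurableSpace 𝒳] [StandardBorelSpace 𝒳] [Nonempty 𝒳]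
    [MeasurableSpace 𝒜]
    (μ : Measure 𝒳) [IsProbabilityMeasure μ]
    (ν : Measure 𝒜) [IsProbabilityMeasure ν]
    (ψ : 𝒜 → 𝒳) (hψ : Measurable ψ)
    (c : 𝒳 × 𝒳 → ℝ≥0∞) (hc : Measurable c)
    (Γ : Measure (𝒳 × 𝒳)) (hΓfst : Γ.fst = μ) (hΓsnd : Γ.snd = ν.map ψ) :
    ∃ γ : Measure (𝒳 × 𝒜), γ.fst = μ ∧ γ.snd = ν ∧
      (∫⁻ p, c p ∂Γ) = ∫⁻ p, c (p.1, ψ p.2) ∂γ := by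
  have : IsFiniteMeasure Γ := ⟨by rw [← Measure.fst_univ, hΓfst]; exact measure_lt_top μ _⟩
  obtain ⟨γ, hγsnd, hγΓ⟩ := Measure.exists_snd_eq_and_map_prodMap_eq ν hψ Γ hΓsnd
  have hidψ : Measurable (Prod.map id ψ : 𝒳 × 𝒜 → 𝒳 × 𝒳) := measurable_id.prodMap hψ
  refine ⟨γ, ?_, hγsnd, ?_⟩
  · rw [← hΓfst, ← hγΓ, Measure.fst, Measure.fst, Measure.map_map measurable_fst hidψ]
    rfl
  · rw [← hγΓ, lintegral_map hc hidψ]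
    rfl

/-- **The gluing step in the proof of Theorem 1.** For every coupling `Γ` of `μ` and the
pushforward `ψ#ν`, gluing `Γ` with the deterministic coupling `(id, ψ)#ν` along the
common marginal `ψ#ν` yields a coupling `γ` of `μ` and `ν` whose transported cost
equals the cost of `Γ`. -/
theorem otp_dag_gluing
    {𝒳 𝒜 : Type*}
    [MeasurableSpace 𝒳] [StandardBorelSpace 𝒳] [Nonempty 𝒳]
    [MeasurableSpace 𝒜] [StandardBorelSpace 𝒜] [Nonempty 𝒜]
    (μ : Measure 𝒳) [IsProbabilityMeasure μ]
    (ν : Measure 𝒜) [IsProbabilityMeasure ν]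
    (ψ : 𝒜 → 𝒳) (hψ : Measurable ψ)
    (c : 𝒳 × 𝒳 → ℝ≥0∞) (hc : Measurable c)
    (Γ : Measure (𝒳 × 𝒳)) (hΓfst : Γ.fst = μ) (hΓsnd : Γ.snd = ν.map ψ) :
    ∃ γ : Measure (𝒳 × 𝒜), γ.fst = μ ∧ γ.snd = ν ∧
      (∫⁻ p, c p ∂Γ) = ∫⁻ p, c (p.1, ψ p.2) ∂γ :=
  otp_dag_gluing_general μ ν ψ hψ c hc Γ hΓfst hΓsnd
end

section
/- Let O be a finite index set, and for each i ∈ O let 𝒳_i, 𝒜_i be nonempty standard Borel spaces, ψ_i : 𝒜_i → 𝒳_i measurable, and c_i : 𝒳_i × 𝒳_i → [0,∞] measurable costs with c_i(x, x) = 0 for all x ∈ 𝒳_i. Let P_d be a probability measure on 𝒳 = Π_{i∈O} 𝒳_i and μ_p a probability measure on 𝒜 = Π_{i∈O} 𝒜_i, and suppose the model is well specified: the pushforward of μ_p under Ψ(a) = (ψ_i(a_i))_{i∈O} equals P_d. Then there exists a family (φ*_i)_{i∈O} of Markov kernels φ*_i from 𝒳_i to 𝒜_i such that (a) for every i ∈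 O the push-forward constraint holds (binding the i-th marginal of P_d with φ*_i equals the i-th marginal of μ_p), and (b) the reconstruction objective R((φ*_i)) = ∫_𝒳 Σ_{i∈O} ∫_{𝒜_i} c_i(x_i, ψ_i(a_i)) dφ*_i(x_i)(a_i) dP_d(x) equals 0; consequently W_c(P_d, Ψ#μ_p) = 0 with c(x,y) = Σ_{i∈O} c_i(x_i, y_i), and the infimum in the OTP-DAG objective is attained at value 0. (Existence part of Theorem 2 of the paper.) -/
open MeasureTheory ProbabilityTheory ENNReal

/-
A well-specified model is inverted in law by disintegrating the law of `(ψ a, a)`, `a ∼ μ`,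
along its first coordinate: the resulting kernel `x ↦ φ x` sends `ψ#μ` back to `μ`, and
`(x, a)` drawn from `ψ#μ ⊗ φ` satisfies `x = ψ a` almost surely, so every reconstruction cost
vanishes. The diagonal coupling of `Pd` with itself shows that `W_c(Pd, Ψ#μp) = 0`.
-/

theorem kantorovich_self_eq_zero {𝒴 : Type*} [MeasurableSpace 𝒴] (μ : Measure 𝒴)
    {C : 𝒴 × 𝒴 → ℝ≥0∞} (hC : ∀ y, C (y, y) = 0) : kantorovich μ μ C = 0 := by
  refine nonpos_iff_eq_zero.mp (sInf_le ⟨μ.map fun y => (y, y), ?_, ?_, ?_⟩)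
  · exact (Measure.fst_map_prodMk measurable_id).trans Measure.map_id
  · exact (Measure.snd_map_prodMk measurable_id).trans Measure.map_id
  · refine (nonpos_iff_eq_zero.mp ?_).symm
    calc ∫⁻ p, C p ∂μ.map (fun y => (y, y)) ≤ ∫⁻ y, C (y, y) ∂μ := lintegral_map_le _ _
      _ = 0 := by simp [hC]

namespace MeasureTheory.Measure

variable {α 𝒳 : Type*} [MeasurableSpace α] [StandardBorelSpace α] [Nonempty α]
  [MeasurableSpace 𝒳] (μ : Measure α) [IsFiniteMeasure μ] (ψ : α → 𝒳)

noncomputable def backwardKernel : Kernel 𝒳 α :=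
  (μ.map fun a => (ψ a, a)).condKernel

variable {ψ}

instance isMarkovKernel_backwardKernel : IsMarkovKernel (μ.backwardKernel ψ) := by
  unfold backwardKernel; infer_instance

theorem compProd_backwardKernel :
    μ.map ψ ⊗ₘ μ.backwardKernel ψ = μ.map fun a => (ψ a, a) := by
  rw [← fst_map_prodMk (Y := fun a => a) measurable_id]
  exact disintegrate _ (μ.map fun a => (ψ a, a)).condKernel

theorem bind_backwardKernel (hψ : Measurable ψ) :
    (μ.map ψ).bind (μ.backwardKernel ψ) = μ := by
  rw [← snd_compProd (μ.map ψ) (μ.backwardKernel ψ), compProd_backwardKernel μ]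
  exact (snd_map_prodMk hψ).trans map_id

theorem lintegral_backwardKernel (hψ : Measurable ψ) {f : 𝒳 × α → ℝ≥0∞} (hf : Measurable f) :
    ∫⁻ x, ∫⁻ a, f (x, a) ∂μ.backwardKernel ψ x ∂μ.map ψ = ∫⁻ a, f (ψ a, a) ∂μ := by
  rw [← lintegral_compProd hf, compProd_backwardKernel μ,
    lintegral_map hf (by fun_prop)]

theorem lintegral_cost_backwardKernel_eq_zero (hψ : Measurable ψ) {c : 𝒳 × 𝒳 → ℝ≥0∞}
    (hc : Measurable c) (hcdiag : ∀ x, c (x, x) = 0) :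
    ∫⁻ x, ∫⁻ a, c (x, ψ a) ∂μ.backwardKernel ψ x ∂μ.map ψ = 0 := by
  simpa [hcdiag] using lintegral_backwardKernel μ hψ (f := fun p => c (p.1, ψ p.2)) (by fun_prop)

end MeasureTheory.Measure

open Measure in
theorem otp_dag_theorem2_existence_general
    {O : Type*} [Fintype O]
    (𝒳 𝒜 : O → Type*)
    [∀ i, MeasurableSpace (𝒳 i)]
    [∀ i, MeasurableSpace (𝒜 i)] [∀ i, StandardBorelSpace (𝒜 i)] [∀ i, Nonempty (𝒜 i)]
    (ψ : ∀ i, 𝒜 i → 𝒳 i) (hψ : ∀ i, Measurable (ψ i))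
    (c : ∀ i, 𝒳 i × 𝒳 i → ℝ≥0∞) (hc : ∀ i, Measurable (c i))
    (hcdiag : ∀ i, ∀ x : 𝒳 i, c i (x, x) = 0)
    (Pd : Measure (∀ i, 𝒳 i))
    (μp : Measure (∀ i, 𝒜 i)) [IsProbabilityMeasure μp]
    (hspec : μp.map (fun a i => ψ i (a i)) = Pd) :
    (∃ φ : ∀ i, Kernel (𝒳 i) (𝒜 i),
        (∀ i, IsMarkovKernel (φ i)) ∧
        (∀ i, (Pd.map (fun x => x i)).bind (fun xi => φ i xi)
            = μp.map (fun a => a i)) ∧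
        (∫⁻ x, ∑ i, ∫⁻ a, c i (x i, ψ i a) ∂(φ i (x i)) ∂Pd) = 0) ∧
    kantorovich Pd (μp.map (fun a i => ψ i (a i)))
      (fun p => ∑ i, c i (p.1 i, p.2 i)) = 0 ∧
    sInf { r | ∃ φ : ∀ i, Kernel (𝒳 i) (𝒜 i),
        (∀ i, IsMarkovKernel (φ i)) ∧
        (∀ i, (Pd.map (fun x => x i)).bind (fun xi => φ i xi)
            = μp.map (fun a => a i)) ∧
        r = ∫⁻ x, ∑ i, ∫⁻ a, c i (x i, ψ i a) ∂(φ i (x i)) ∂Pd } = 0 := by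
  have hmarginal : ∀ i, Pd.map (fun x => x i) = (μp.map fun a => a i).map (ψ i) := fun i => by
    rw [← hspec, map_map (by fun_prop) (by fun_prop), map_map (hψ i) (by fun_prop)]
    rfl
  set φ := fun i => (μp.map fun a => a i).backwardKernel (ψ i)
  have hbind : ∀ i, (Pd.map (fun x => x i)).bind (fun xi => φ i xi) = μp.map (fun a => a i) :=
    fun i => by rw [hmarginal]; exact bind_backwardKernel _ (hψ i)
  have hcost : (∫⁻ x, ∑ i, ∫⁻ a, c i (x i, ψ i a) ∂(φ i (x i)) ∂Pd) = 0 := by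
    have hmeas : ∀ i, Measurable fun t => ∫⁻ a, c i (t, ψ i a) ∂φ i t := fun i => by
      have := hc i; have := hψ i; fun_prop
    rw [lintegral_finsetSum _ fun i _ => by exact (hmeas i).comp (measurable_pi_apply i)]
    refine Finset.sum_eq_zero fun i _ => ?_
    rw [← lintegral_map (hmeas i) (measurable_pi_apply i), hmarginal]
    exact lintegral_cost_backwardKernel_eq_zero _ (hψ i) (hc i) (hcdiag i)
  refine ⟨⟨φ, fun i => inferInstance, hbind, hcost⟩, ?_, ?_⟩
  · rw [hspec]
    exact kantorovich_self_eq_zero Pd fun x => Finset.sum_eq_zero fun i _ => hcdiag i (x i)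
  · exact nonpos_iff_eq_zero.mp (sInf_le ⟨φ, fun i => inferInstance, hbind, hcost.symm⟩)

/-- **Existence part of Theorem 2 of the paper.** If the model is well-specified
(`Ψ#μp = Pd`) and each cost vanishes on the diagonal, then there exists a family of
Markov kernels (backward maps) satisfying all the push-forward constraints whose
reconstruction objective is `0`; consequently the Kantorovich cost `W_c(Pd, Ψ#μp)` is
`0` and the infimum in the OTP-DAG objective is attained at value `0`. -/
theorem otp_dag_theorem2_existence
    {O : Type*} [Fintype O]
    (𝒳 𝒜 : O → Type*)
    [∀ i, MeasurableSpace (𝒳 i)] [∀ i, StandardBorelSpace (𝒳 i)] [∀ i, Nonempty (𝒳 i)]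
    [∀ i, MeasurableSpace (𝒜 i)] [∀ i, StandardBorelSpace (𝒜 i)] [∀ i, Nonempty (𝒜 i)]
    (ψ : ∀ i, 𝒜 i → 𝒳 i) (hψ : ∀ i, Measurable (ψ i))
    (c : ∀ i, 𝒳 i × 𝒳 i → ℝ≥0∞) (hc : ∀ i, Measurable (c i))
    (hcdiag : ∀ i, ∀ x : 𝒳 i, c i (x, x) = 0)
    (Pd : Measure (∀ i, 𝒳 i)) [IsProbabilityMeasure Pd]
    (μp : Measure (∀ i, 𝒜 i)) [IsProbabilityMeasure μp]
    (hspec : μp.map (fun a i => ψ i (a i)) = Pd) :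
    (∃ φ : ∀ i, Kernel (𝒳 i) (𝒜 i),
        (∀ i, IsMarkovKernel (φ i)) ∧
        (∀ i, (Pd.map (fun x => x i)).bind (fun xi => φ i xi)
            = μp.map (fun a => a i)) ∧
        (∫⁻ x, ∑ i, ∫⁻ a, c i (x i, ψ i a) ∂(φ i (x i)) ∂Pd) = 0) ∧
    kantorovich Pd (μp.map (fun a i => ψ i (a i)))
      (fun p => ∑ i, c i (p.1 i, p.2 i)) = 0 ∧
    sInf { r | ∃ φ : ∀ i, Kernel (𝒳 i) (𝒜 i),
        (∀ i, IsMarkovKernel (φ i)) ∧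
        (∀ i, (Pd.map (fun x => x i)).bind (fun xi => φ i xi)
            = μp.map (fun a => a i)) ∧
        r = ∫⁻ x, ∑ i, ∫⁻ a, c i (x i, ψ i a) ∂(φ i (x i)) ∂Pd } = 0 :=
  otp_dag_theorem2_existence_general 𝒳 𝒜 ψ hψ c hc hcdiag Pd μp hspec
end
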